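/- Let r > 4 and define t_0 = 1, t_k = (1 + sqrt(1 + r·t_{k-1}²))/2, a_k = (t_{k-1} - 1)/t_k. Then t_k → +∞ and a_k converges to 2/sqrt(r). -/

import Mathlib

/-!
Since `r ≥ 4`, `√(1 + r t²) > 2t`, so each step raises `t` by at least `1/2` and `t → ∞`.
Then `a (k + 1) = F (t k)` with `F x = (x - 1) / ((1 + √(1 + r x²)) / 2)`, and substituting
`u = 1/x` turns `F` into `(2 - 2u) / (u + √(u² + r))`, which is continuous at `u = 0` with
value `2 / √r`.
-/

open Filter Real Topology

noncomputable def fistaStep (r x : ℝ) : ℝ := (1 + √(1 + r * x ^ 2)) / 2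

lemma add_half_le_fistaStep {r : ℝ} (hr : 4 ≤ r) (x : ℝ) : x + 1 / 2 ≤ fistaStep r x := by
  have : 2 * x ≤ √(1 + r * x ^ 2) := Real.le_sqrt_of_sq_le (by nlinarith [sq_nonneg x])
  unfold fistaStep
  linarith

lemma one_add_half_le_of_fistaStep {r : ℝ} (hr : 4 ≤ r) {t : ℕ → ℝ} (ht0 : t 0 = 1)
    (hrec : ∀ k, t (k + 1) = fistaStep r (t k)) (k : ℕ) : 1 + k / 2 ≤ t k := by
  induction k with
  | zero => simp [ht0]
  | succ k ih =>
    have := add_half_le_fistaStep hr (t k)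
    push_cast
    linarith [hrec k]

lemma tendsto_atTop_of_fistaStep {r : ℝ} (hr : 4 ≤ r) {t : ℕ → ℝ} (ht0 : t 0 = 1)
    (hrec : ∀ k, t (k + 1) = fistaStep r (t k)) : Tendsto t atTop atTop :=
  tendsto_atTop_mono (one_add_half_le_of_fistaStep hr ht0 hrec) <|
    tendsto_atTop_add_const_left _ _ <|
      (tendsto_natCast_atTop_atTop).atTop_div_const (by norm_num)

lemma sub_one_div_fistaStep_eq {r x : ℝ} (hr : 0 ≤ r) (hx : 0 < x) :
    (x - 1) / fistaStep r x = (2 - 2 * x⁻¹) / (x⁻¹ + √(x⁻¹ ^ 2 + r)) := by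
  have hsqrt : √(x⁻¹ ^ 2 + r) = √(1 + r * x ^ 2) / x := by
    rw [show x⁻¹ ^ 2 + r = (1 + r * x ^ 2) / x ^ 2 by field_simp,
      Real.sqrt_div (by positivity), Real.sqrt_sq hx.le]
  have : 0 < 1 + √(1 + r * x ^ 2) := by positivity
  rw [hsqrt, fistaStep]
  field_simp

lemma tendsto_sub_one_div_fistaStep {r : ℝ} (hr : 0 < r) :
    Tendsto (fun x ↦ (x - 1) / fistaStep r x) atTop (𝓝 (2 / √r)) := by
  let G : ℝ → ℝ := fun u ↦ (2 - 2 * u) / (u + √(u ^ 2 + r))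
  have hG : ContinuousAt G 0 :=
    ContinuousAt.div (by fun_prop) (by fun_prop) (by simpa using Real.sqrt_ne_zero'.2 hr)
  have hG0 : G 0 = 2 / √r := by simp [G]
  refine (hG0 ▸ hG.tendsto.comp tendsto_inv_atTop_zero).congr' ?_
  filter_upwards [eventually_gt_atTop 0] with x hx
  exact (sub_one_div_fistaStep_eq hr.le hx).symm

theorem fista_r_gt_four (r : ℝ) (hr : 4 < r) (t a : ℕ → ℝ) (ht0 : t 0 = 1)
    (hrec : ∀ k, t (k + 1) = (1 + Real.sqrt (1 + r * (t k) ^ 2)) / 2)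
    (ha : ∀ k, a (k + 1) = (t k - 1) / t (k + 1)) :
    Filter.Tendsto t Filter.atTop Filter.atTop ∧
      Filter.Tendsto a Filter.atTop (nhds (2 / Real.sqrt r)) := by
  have htT : Tendsto t atTop atTop := tendsto_atTop_of_fistaStep hr.le ht0 hrec
  refine ⟨htT, (tendsto_add_atTop_iff_nat 1).mp ?_⟩
  refine ((tendsto_sub_one_div_fistaStep (by linarith)).comp htT).congr fun k ↦ ?_
  simp only [Function.comp, ha, hrec k, fistaStep]
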